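/- arXiv:1503.06013 — 3 statements merged into one kernel-verified Lean document; each statement's English description precedes it below -/
import Mathlib

section
/- For all distinct positive real numbers a and b, 2·I(a,b)² > A(a,b)² + G(a,b)²; equivalently, I(a,b) > Q(A(a,b), G(a,b)) where Q(x,y) = √((x²+y²)/2) is the root-square mean. -/
noncomputable def A (a b : ℝ) : ℝ := (a + b) / 2
noncomputable def G (a b : ℝ) : ℝ := Real.sqrt (a * b)
noncomputable def I (a b : ℝ) : ℝ := (1 / Real.exp 1) * (a ^ a / b ^ b) ^ (1 / (a - b))
noncomputable def Q (a b : ℝ) : ℝ := Real.sqrt ((a ^ 2 + b ^ 2) / 2)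

/-! By symmetry let b < a and put t = a / b > 1. Since log I(a,b) = (a log a - b log b)/(a - b) - 1
and A² + G² = b² (t² + 6t + 1)/4, the inequality 2I² > A² + G² becomes `0 < gap t`, where
`gap t = 2t log t - (t - 1)(2 + log ((t² + 6t + 1)/8))`. Here `gap 1 = gap' 1 = 0` and
`gap'' t = 2(t - 1)(10t - t² - 1) / (t (t² + 6t + 1)²)`, so `gap'` increases on [1, 7].
For t ≥ 7, `log y ≤ sinh (log y)` with y = 1 + 6/t + 1/t² bounds `gap'` below by 3 log 2
minus a rational function of t that stays under 2.079. Thus `gap' > 0` on (1, ∞), and `gap > 0`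
there. -/

open Real Set

lemma lt_of_hasDerivAt_pos {f f' : ℝ → ℝ} {a b : ℝ} (hab : a < b)
    (hf : ∀ x ∈ Icc a b, HasDerivAt f (f' x) x) (hf' : ∀ x ∈ Ioo a b, 0 < f' x) :
    f a < f b := by
  refine strictMonoOn_of_hasDerivWithinAt_pos (f' := f') (convex_Icc a b)
    (fun x hx ↦ (hf x hx).continuousAt.continuousWithinAt) (fun x hx ↦ ?_) (fun x hx ↦ ?_)
    (left_mem_Icc.2 hab.le) (right_mem_Icc.2 hab.le) hab
  · rw [interior_Icc] at hx ⊢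
    exact (hf x (Ioo_subset_Icc_self hx)).hasDerivWithinAt
  · rw [interior_Icc] at hx
    exact hf' x hx

noncomputable def gap (t : ℝ) : ℝ :=
  2 * t * log t - (t - 1) * (2 + log ((t ^ 2 + 6 * t + 1) / 8))

noncomputable def gapDeriv (t : ℝ) : ℝ :=
  2 * log t - log ((t ^ 2 + 6 * t + 1) / 8) - 2 * (t - 1) * (t + 3) / (t ^ 2 + 6 * t + 1)

section gap

variable {t : ℝ}

lemma hasDerivAt_quadratic :
    HasDerivAt (fun x ↦ x ^ 2 + 6 * x + 1) (2 * t + 6) t := by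
  refine (((hasDerivAt_pow 2 t).add ((hasDerivAt_id' t).const_mul 6)).add_const 1).congr_deriv ?_
  ring

lemma hasDerivAt_log_quadratic (ht : 0 < t) :
    HasDerivAt (fun x ↦ log ((x ^ 2 + 6 * x + 1) / 8))
      ((2 * t + 6) / 8 / ((t ^ 2 + 6 * t + 1) / 8)) t :=
  (hasDerivAt_quadratic.div_const 8).log (by positivity)

lemma hasDerivAt_gap (ht : 0 < t) : HasDerivAt gap (gapDeriv t) t := by
  have hlin := ((hasDerivAt_id' t).const_mul 2).mul (hasDerivAt_log ht.ne')
  have hprod := ((hasDerivAt_id' t).sub_const 1).mul ((hasDerivAt_log_quadratic ht).const_add 2)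
  refine (hlin.sub hprod).congr_deriv ?_
  rw [gapDeriv]
  field_simp
  ring

lemma hasDerivAt_gapDeriv (ht : 0 < t) :
    HasDerivAt gapDeriv (2 * (t - 1) * (10 * t - t ^ 2 - 1) / (t * (t ^ 2 + 6 * t + 1) ^ 2)) t := by
  have hD : 0 < t ^ 2 + 6 * t + 1 := by positivity
  have hnum : HasDerivAt (fun x ↦ 2 * (x - 1) * (x + 3)) (2 * 1 * (t + 3) + 2 * (t - 1) * 1) t :=
    (((hasDerivAt_id' t).sub_const 1).const_mul 2).mul ((hasDerivAt_id' t).add_const 3)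
  refine ((((hasDerivAt_log ht.ne').const_mul 2).sub (hasDerivAt_log_quadratic ht)).sub
    (hnum.div hasDerivAt_quadratic hD.ne')).congr_deriv ?_
  field_simp
  ring

lemma gapDeriv_one : gapDeriv 1 = 0 := by
  norm_num [gapDeriv]

lemma gapDeriv_pos_of_le_seven (h1 : 1 < t) (h7 : t ≤ 7) : 0 < gapDeriv t := by
  rw [← gapDeriv_one]
  refine lt_of_hasDerivAt_pos h1 (fun x hx ↦ hasDerivAt_gapDeriv (by linarith [hx.1]))
    (fun x hx ↦ ?_)
  have hx0 : 0 < x := by linarith [hx.1]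
  have : 0 < 10 * x - x ^ 2 - 1 := by nlinarith [hx.1, hx.2]
  have : 0 < x - 1 := by linarith [hx.1]
  positivity

lemma gapDeriv_pos_of_seven_le (h7 : 7 ≤ t) : 0 < gapDeriv t := by
  have ht : 0 < t := by linarith
  have hD : 0 < t ^ 2 + 6 * t + 1 := by positivity
  set y := (t ^ 2 + 6 * t + 1) / t ^ 2
  have hy : 1 ≤ y := by rw [le_div_iff₀ (by positivity)]; linarith
  have ht2 : t ^ 2 ≠ 0 := by positivity
  have hlog : log y ≤ (y - y⁻¹) / 2 := by
    rw [← sinh_log (by linarith)]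
    exact self_le_sinh_iff.2 (log_nonneg hy)
  have hsplit : gapDeriv t = 3 * log 2 - log y - 2 * (t - 1) * (t + 3) / (t ^ 2 + 6 * t + 1) := by
    rw [gapDeriv, log_div hD.ne' ht2, log_div hD.ne' (by norm_num),
      show (8 : ℝ) = 2 ^ 3 by norm_num, log_pow, log_pow]
    push_cast
    ring
  have hrat : (y - y⁻¹) / 2 + 2 * (t - 1) * (t + 3) / (t ^ 2 + 6 * t + 1) < 2.079 := by
    rw [inv_div, div_sub_div _ _ (by positivity) hD.ne', div_div,
      div_add_div _ _ (by positivity) hD.ne', div_lt_iff₀ (by positivity)]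
    nlinarith [sq_nonneg (t - 7), pow_pos ht 3, pow_pos ht 4]
  linarith [log_two_gt_d9]

lemma gapDeriv_pos (h1 : 1 < t) : 0 < gapDeriv t := by
  rcases le_total t 7 with h7 | h7
  · exact gapDeriv_pos_of_le_seven h1 h7
  · exact gapDeriv_pos_of_seven_le h7

lemma gap_pos (h1 : 1 < t) : 0 < gap t := by
  have h : gap 1 = 0 := by simp [gap]
  rw [← h]
  exact lt_of_hasDerivAt_pos h1 (fun x hx ↦ hasDerivAt_gap (by linarith [hx.1]))
    (fun x hx ↦ gapDeriv_pos hx.1)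

end gap

lemma identric_eq_exp {a b : ℝ} (ha : 0 < a) (hb : 0 < b) :
    I a b = exp ((a * log a - b * log b) / (a - b) - 1) := by
  rw [I, rpow_def_of_pos ha, rpow_def_of_pos hb, ← exp_sub, ← exp_mul, one_div (exp 1),
    ← exp_neg, ← exp_add]
  ring_nf

lemma identric_comm {a b : ℝ} (ha : 0 < a) (hb : 0 < b) : I a b = I b a := by
  rw [identric_eq_exp ha hb, identric_eq_exp hb ha, ← neg_div_neg_eq]
  ring_nf

lemma sq_add_sq_lt_two_mul_identric_sq {a b : ℝ} (hb : 0 < b) (hba : b < a) :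
    A a b ^ 2 + G a b ^ 2 < 2 * I a b ^ 2 := by
  obtain ⟨t, ht, rfl⟩ : ∃ t, 1 < t ∧ a = t * b :=
    ⟨a / b, (one_lt_div hb).2 hba, by field_simp⟩
  have ht1 : 0 < t - 1 := by linarith
  have hI : I (t * b) b = b * exp (t * log t / (t - 1) - 1) := by
    have : (t * b * log (t * b) - b * log b) / (t * b - b) = t * log t / (t - 1) + log b := by
      rw [log_mul (by positivity) hb.ne']
      field_simp
      ring
    rw [identric_eq_exp (by positivity) hb, this, add_sub_right_comm, exp_add, exp_log hb,
      mul_comm]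
  have hgap : (t ^ 2 + 6 * t + 1) / 8 < exp (t * log t / (t - 1) - 1) ^ 2 := by
    rw [← exp_nat_mul, ← log_lt_iff_lt_exp (by positivity)]
    have hpos := gap_pos ht
    rw [gap] at hpos
    have : 2 + log ((t ^ 2 + 6 * t + 1) / 8) < 2 * (t * log t / (t - 1)) := by
      rw [mul_div_assoc', lt_div_iff₀ ht1]
      linarith
    push_cast
    linarith
  calc A (t * b) b ^ 2 + G (t * b) b ^ 2 = 2 * b ^ 2 * ((t ^ 2 + 6 * t + 1) / 8) := by
        rw [A, G, sq_sqrt (by positivity)]; ring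
    _ < 2 * b ^ 2 * exp (t * log t / (t - 1) - 1) ^ 2 := by gcongr
    _ = 2 * I (t * b) b ^ 2 := by rw [hI]; ring

theorem stmt_1 (a b : ℝ) (ha : 0 < a) (hb : 0 < b) (hab : a ≠ b) :
    2 * I a b ^ 2 > A a b ^ 2 + G a b ^ 2 ∧ I a b > Q (A a b) (G a b) := by
  wlog hba : b < a generalizing a b
  · have h := this b a hb ha hab.symm (lt_of_le_of_ne (not_lt.1 hba) hab)
    rwa [identric_comm hb ha, show A b a = A a b by rw [A, A, add_comm],
      show G b a = G a b by rw [G, G, mul_comm]] at h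
  have h := sq_add_sq_lt_two_mul_identric_sq hb hba
  refine ⟨h, ?_⟩
  rw [gt_iff_lt, Q, sqrt_lt' (by rw [identric_eq_exp ha hb]; positivity)]
  linarith
end

section
/- For all distinct positive real numbers a and b, 2·I(a,b)²/(A(a,b)² + G(a,b)²) < 23/20. -/
/-!
Put `a = t (1 + s)`, `b = t (1 - s)` with `t > 0`, `0 < |s| < 1`, and `u = s²`. Then `A = t`,
`G² = t² (1 - u)`, and the series of `log (1 ± s)` give `I² = t² exp (-D u)` with
`D u = ∑_{k ≥ 1} u^k / (k (2k + 1))`. So the claim is `exp (-D u) < 23/40 (2 - u)` on `[0, 1]`.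
This is tight (the left side over the right peaks at about `0.9916`, near `u ≈ 0.85`),
so it is checked numerically: on each cell `[i/200, (i+1)/200]`, bound `D` below by its
12-term partial sum at the left end and `exp` below by its cubic Taylor polynomial, which
leaves a finite computation in `ℚ`.
-/

open Real Finset
open scoped Nat

def identricTerm {K : Type*} [Field K] (u : K) (k : ℕ) : K :=
  u ^ (k + 1) / ((k + 1) * (2 * k + 3))

@[simp, norm_cast]
lemma Rat.cast_identricTerm {K : Type*} [Field K] [CharZero K] (u : ℚ) (k : ℕ) :
    ((identricTerm u k : ℚ) : K) = identricTerm (u : K) k := by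
  simp [identricTerm]

section Order

variable {K : Type*} [Field K] [LinearOrder K] [IsStrictOrderedRing K]

lemma identricTerm_nonneg {u : K} (hu : 0 ≤ u) (k : ℕ) : 0 ≤ identricTerm u k := by
  unfold identricTerm; positivity

lemma identricTerm_mono {u v : K} (hu : 0 ≤ u) (huv : u ≤ v) (k : ℕ) :
    identricTerm u k ≤ identricTerm v k := by
  unfold identricTerm; gcongr

end Order

lemma hasSum_identricTerm {s : ℝ} (hs : |s| < 1) (hs0 : s ≠ 0) :
    HasSum (identricTerm (s ^ 2)) (2 - (log (1 + s) - log (1 - s)) / s - log (1 - s ^ 2)) := by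
  have hodd := (hasSum_nat_add_iff' 1).mpr ((hasSum_log_sub_log_of_abs_lt_one hs).div_const s)
  have hlog := hasSum_pow_div_log_of_abs_lt_one (x := s ^ 2) (by
    rw [abs_pow]; exact pow_lt_one₀ (abs_nonneg s) hs two_ne_zero)
  convert (hlog.sub hodd).congr_fun fun k => ?_ using 1
  · rfl
  · simp only [sum_range_one]
    field_simp
    ring
  · simp only [identricTerm]
    push_cast
    field_simp
    ring

lemma log_I {a b : ℝ} (ha : 0 < a) (hb : 0 < b) :
    log (I a b) = (a * log a - b * log b) / (a - b) - 1 := by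
  rw [I, log_mul (by positivity) (by positivity), one_div, log_inv, log_exp,
    log_rpow (by positivity), log_div (by positivity) (by positivity), log_rpow ha, log_rpow hb]
  ring

lemma I_pos {a b : ℝ} (ha : 0 < a) (hb : 0 < b) : 0 < I a b := by
  unfold I; positivity

lemma I_sq_mul {t s : ℝ} (ht : 0 < t) (hs : |s| < 1) (hs0 : s ≠ 0) :
    I (t * (1 + s)) (t * (1 - s)) ^ 2
      = t ^ 2 * exp (-(2 - (log (1 + s) - log (1 - s)) / s - log (1 - s ^ 2))) := by
  obtain ⟨hs1, hs2⟩ := abs_lt.mp hs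
  have h1 : 0 < 1 + s := by linarith
  have h2 : 0 < 1 - s := by linarith
  have hlog : 2 * log (I (t * (1 + s)) (t * (1 - s)))
      = 2 * log t - (2 - (log (1 + s) - log (1 - s)) / s - log (1 - s ^ 2)) := by
    rw [log_I (by positivity) (by positivity), show t * (1 + s) - t * (1 - s) = 2 * t * s by ring,
      log_mul ht.ne' h1.ne', log_mul ht.ne' h2.ne',
      show 1 - s ^ 2 = (1 + s) * (1 - s) by ring, log_mul h1.ne' h2.ne']
    field_simp
    ring
  rw [← exp_log (pow_pos (I_pos (by positivity) (by positivity)) 2), log_pow, Nat.cast_ofNat,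
    hlog, sub_eq_add_neg, exp_add, ← log_rpow ht, exp_log (by positivity), rpow_two]

lemma A_sq_add_G_sq_mul {t s : ℝ} (ht : 0 < t) (hs : |s| < 1) :
    A (t * (1 + s)) (t * (1 - s)) ^ 2 + G (t * (1 + s)) (t * (1 - s)) ^ 2
      = t ^ 2 * (2 - s ^ 2) := by
  obtain ⟨hs1, hs2⟩ := abs_lt.mp hs
  rw [A, G, sq_sqrt (mul_pos (mul_pos ht (by linarith)) (mul_pos ht (by linarith))).le]
  ring

lemma exists_eq_mul_one_add_mul_one_sub {a b : ℝ} (ha : 0 < a) (hb : 0 < b) (hab : a ≠ b) :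
    ∃ t s : ℝ, 0 < t ∧ |s| < 1 ∧ s ≠ 0 ∧ a = t * (1 + s) ∧ b = t * (1 - s) := by
  refine ⟨(a + b) / 2, (a - b) / (a + b), by positivity, ?_, ?_, ?_, ?_⟩
  · rw [abs_div, abs_of_pos (by positivity : 0 < a + b), div_lt_one (by positivity), abs_lt]
    constructor <;> linarith
  · exact div_ne_zero (sub_ne_zero.mpr hab) (by positivity)
  all_goals field_simp; ring

lemma exists_nat_div_le_le_succ_div {n : ℕ} (hn : 0 < n) {u : ℝ} (hu0 : 0 ≤ u)
    (hu1 : u ≤ 1) :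
    ∃ i < n, (i : ℝ) / n ≤ u ∧ u ≤ (i + 1) / n := by
  have hn' : (0 : ℝ) < n := by exact_mod_cast hn
  refine ⟨min ⌊n * u⌋₊ (n - 1), by omega, ?_, ?_⟩
  · rw [div_le_iff₀ hn', mul_comm]
    exact (Nat.cast_le.mpr (min_le_left _ _)).trans (Nat.floor_le (by positivity))
  · rw [le_div_iff₀ hn', mul_comm]
    rcases min_choice ⌊n * u⌋₊ (n - 1) with h | h <;> rw [h]
    · exact (Nat.lt_floor_add_one _).le
    · rw [Nat.cast_sub hn, Nat.cast_one, sub_add_cancel]; nlinarith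

lemma forall_lt_200_cell_bound :
    ∀ i : ℕ, i < 200 → (40 : ℚ) < 23 * (2 - ((i : ℚ) + 1) / 200) *
      ∑ j ∈ range 4, (∑ k ∈ range 12, identricTerm ((i : ℚ) / 200) k) ^ j / j ! := by
  decide +kernel

lemma exp_neg_lt_of_cell_bound {u d lo w : ℝ} (N m : ℕ) (hlo : 0 ≤ lo) (hlu : lo ≤ u)
    (huw : u ≤ w) (h : HasSum (identricTerm u) d)
    (hcell : 40 < 23 * (2 - w) *
      ∑ j ∈ range m, (∑ k ∈ range N, identricTerm lo k) ^ j / j !) :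
    exp (-d) < 23 / 40 * (2 - u) := by
  set p := ∑ k ∈ range N, identricTerm lo k
  have hp0 : 0 ≤ p := sum_nonneg fun k _ => identricTerm_nonneg hlo k
  have hpd : p ≤ d := (sum_le_sum fun k _ => identricTerm_mono hlo hlu k).trans
    (sum_le_hasSum (range N) (fun k _ => identricTerm_nonneg (hlo.trans hlu) k) h)
  have hexp := sum_le_exp_of_nonneg hp0 m
  have hE : 0 ≤ ∑ j ∈ range m, p ^ j / j ! := sum_nonneg fun j _ => by positivity
  have hw : 0 < 2 - w := by
    by_contra! hw
    nlinarith
  have hexp_p : 40 < 23 * (2 - w) * exp p := by nlinarith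
  calc exp (-d) ≤ exp (-p) := exp_le_exp.mpr (neg_le_neg hpd)
    _ = (exp p)⁻¹ := exp_neg p
    _ < 23 / 40 * (2 - w) := by
      rw [inv_lt_iff_one_lt_mul₀ (exp_pos p)]; linarith
    _ ≤ 23 / 40 * (2 - u) := by linarith

lemma exp_neg_lt_of_hasSum {u d : ℝ} (hu0 : 0 ≤ u) (hu1 : u ≤ 1)
    (h : HasSum (identricTerm u) d) :
    exp (-d) < 23 / 40 * (2 - u) := by
  obtain ⟨i, hi, hlo, hw⟩ := exists_nat_div_le_le_succ_div (by norm_num : 0 < 200) hu0 hu1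
  have hcell := (Rat.cast_lt (K := ℝ)).mpr (forall_lt_200_cell_bound i hi)
  push_cast at hlo hw hcell
  exact exp_neg_lt_of_cell_bound 12 4 (by positivity) hlo hw h hcell

theorem stmt_2 (a b : ℝ) (ha : 0 < a) (hb : 0 < b) (hab : a ≠ b) :
    2 * I a b ^ 2 / (A a b ^ 2 + G a b ^ 2) < 23 / 20 := by
  obtain ⟨t, s, ht, hs, hs0, rfl, rfl⟩ := exists_eq_mul_one_add_mul_one_sub ha hb hab
  have hbound := exp_neg_lt_of_hasSum (sq_nonneg s) (by
    rw [← sq_abs]; exact pow_le_one₀ (abs_nonneg s) hs.le) (hasSum_identricTerm hs hs0)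
  rw [I_sq_mul ht hs hs0, A_sq_add_G_sq_mul ht hs, div_lt_iff₀ (by nlinarith)]
  linarith [mul_lt_mul_of_pos_left hbound (pow_pos ht 2)]
end

section
/- For all distinct positive real numbers a and b, G(a,b)·I(a,b)/L(a,b) < √(I(a,b)·G(a,b)) < L(I(a,b), G(a,b)) < L(a,b). -/
noncomputable def L (a b : ℝ) : ℝ := (a - b) / (Real.log a - Real.log b)
/-!
Write `a = g eˣ`, `b = g e⁻ˣ` with `g = G(a,b)`. Then `L(a,b) = g sinh x / x` and
`I(a,b) = g eᵘ` with `u = x coth x - 1 > 0`, so `√(I G) = g e^{u/2}` and `L(I,G) = g (eᵘ - 1) / u`.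
The middle inequality is `G < L` for the pair `(I, G)`; the outer ones become
`e^{u/2} < sinh x / x` and `eᵘ < 1 + cosh x - sinh x / x`. Taking logarithms, each is a function
of `x` that tends to `0` at `0⁺` and is increasing: the sign of its derivative reduces to Cusa's
inequality `3 sinh x < x (2 + cosh x)`, resp. (after halving `x`) to Lazarević's
`x³ cosh x < sinh³ x`, which itself follows from Cusa's inequality at `2x`.
-/

open Real Filter Topology Set

lemma pos_of_deriv_pos_of_tendsto_zero {f f' : ℝ → ℝ} (hf : ∀ x, 0 < x → HasDerivAt f (f' x) x)
    (hf' : ∀ x, 0 < x → 0 < f' x) (hlim : Tendsto f (𝓝[>] 0) (𝓝 0)) {x : ℝ} (hx : 0 < x) :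
    0 < f x := by
  have hmono : StrictMonoOn f (Ioi 0) := by
    refine strictMonoOn_of_deriv_pos (convex_Ioi 0)
      (fun t ht => (hf t ht).continuousAt.continuousWithinAt) fun t ht => ?_
    rw [interior_Ioi] at ht
    rw [(hf t ht).deriv]
    exact hf' t ht
  have hhalf : 0 ≤ f (x / 2) := by
    refine le_of_tendsto hlim ?_
    filter_upwards [Ioo_mem_nhdsGT (half_pos hx)] with t ht
    exact (hmono ht.1 (half_pos hx) ht.2).le
  exact hhalf.trans_lt (hmono (half_pos hx) hx (half_lt_self hx))

lemma pos_of_deriv_pos_of_map_zero {f f' : ℝ → ℝ} (hf : ∀ x, HasDerivAt f (f' x) x)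
    (hf0 : f 0 = 0) (hf' : ∀ x, 0 < x → 0 < f' x) {x : ℝ} (hx : 0 < x) : 0 < f x :=
  pos_of_deriv_pos_of_tendsto_zero (fun x _ => hf x) hf'
    (by simpa [hf0] using (hf 0).continuousAt.tendsto.mono_left nhdsWithin_le_nhds) hx

namespace Real

lemma sinh_lt_mul_cosh {x : ℝ} (hx : 0 < x) : sinh x < x * cosh x := by
  have hderiv (t : ℝ) : HasDerivAt (fun t => t * cosh t - sinh t) (t * sinh t) t :=
    (((hasDerivAt_id' t).mul (hasDerivAt_cosh t)).sub (hasDerivAt_sinh t)).congr_deriv (by ring)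
  have := pos_of_deriv_pos_of_map_zero hderiv (by simp)
    (fun t ht => mul_pos ht (sinh_pos_iff.2 ht)) hx
  linarith

lemma two_mul_cosh_sub_one_lt {x : ℝ} (hx : 0 < x) : 2 * (cosh x - 1) < x * sinh x := by
  have hderiv (t : ℝ) :
      HasDerivAt (fun t => t * sinh t - 2 * (cosh t - 1)) (t * cosh t - sinh t) t :=
    (((hasDerivAt_id' t).mul (hasDerivAt_sinh t)).sub
      (((hasDerivAt_cosh t).sub_const 1).const_mul 2)).congr_deriv (by ring)
  have := pos_of_deriv_pos_of_map_zero hderiv (by simp)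
    (fun t ht => sub_pos.2 (sinh_lt_mul_cosh ht)) hx
  linarith

lemma three_mul_sinh_lt {x : ℝ} (hx : 0 < x) : 3 * sinh x < x * (2 + cosh x) := by
  have hderiv (t : ℝ) :
      HasDerivAt (fun t => t * (2 + cosh t) - 3 * sinh t) (t * sinh t - 2 * (cosh t - 1)) t :=
    (((hasDerivAt_id' t).mul ((hasDerivAt_cosh t).const_add 2)).sub
      ((hasDerivAt_sinh t).const_mul 3)).congr_deriv (by ring)
  have := pos_of_deriv_pos_of_map_zero hderiv (by simp)
    (fun t ht => sub_pos.2 (two_mul_cosh_sub_one_lt ht)) hx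
  linarith

lemma tendsto_sinh_div_self : Tendsto (fun x => sinh x / x) (𝓝[≠] 0) (𝓝 1) := by
  have := hasDerivAt_iff_tendsto_slope.1 (by simpa using hasDerivAt_sinh (0 : ℝ))
  refine this.congr fun x => ?_
  simp [slope_def_field]

lemma tendsto_log_sinh_div_self : Tendsto (fun x => log (sinh x / x)) (𝓝[≠] 0) (𝓝 0) := by
  simpa using tendsto_sinh_div_self.log one_ne_zero

lemma tendsto_mul_cosh_div_sinh : Tendsto (fun x => x * cosh x / sinh x) (𝓝[≠] 0) (𝓝 1) := by
  have hcosh : Tendsto cosh (𝓝[≠] 0) (𝓝 1) := by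
    simpa using continuous_cosh.continuousAt.tendsto.mono_left (nhdsWithin_le_nhds (a := (0:ℝ)))
  have h := hcosh.div tendsto_sinh_div_self one_ne_zero
  rw [div_one] at h
  refine h.congr fun x => ?_
  simp only [Pi.div_apply, div_div_eq_mul_div, mul_comm]

lemma hasDerivAt_sinh_div_self {x : ℝ} (hx : x ≠ 0) :
    HasDerivAt (fun t => sinh t / t) ((x * cosh x - sinh x) / x ^ 2) x :=
  ((hasDerivAt_sinh x).div (hasDerivAt_id' x) hx).congr_deriv (by ring)

lemma hasDerivAt_log_sinh_div_self {x : ℝ} (hx : 0 < x) :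
    HasDerivAt (fun t => log (sinh t / t)) (cosh x / sinh x - 1 / x) x := by
  have hs := sinh_pos_iff.2 hx
  refine ((hasDerivAt_sinh_div_self hx.ne').log (by positivity)).congr_deriv ?_
  field_simp

lemma hasDerivAt_mul_cosh_div_sinh {x : ℝ} (hx : x ≠ 0) :
    HasDerivAt (fun t => t * cosh t / sinh t) ((cosh x * sinh x - x) / sinh x ^ 2) x := by
  have hs : sinh x ≠ 0 := by simpa using hx
  refine (((hasDerivAt_id' x).mul (hasDerivAt_cosh x)).div (hasDerivAt_sinh x) hs).congr_deriv ?_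
  simp only [Pi.mul_apply]
  field_simp
  linear_combination (-x) * cosh_sq x

lemma pow_three_mul_cosh_lt {x : ℝ} (hx : 0 < x) : x ^ 3 * cosh x < sinh x ^ 3 := by
  have hderiv (t : ℝ) (ht : 0 < t) : HasDerivAt (fun t => 3 * log (sinh t / t) - log (cosh t))
      (3 * (cosh t / sinh t - 1 / t) - sinh t / cosh t) t :=
    ((hasDerivAt_log_sinh_div_self ht).const_mul 3).sub
      ((hasDerivAt_cosh t).log (cosh_pos t).ne')
  have hderiv_pos (t : ℝ) (ht : 0 < t) : 0 < 3 * (cosh t / sinh t - 1 / t) - sinh t / cosh t := by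
    have hs := sinh_pos_iff.2 ht
    have hc := cosh_pos t
    have hcusa := three_mul_sinh_lt (by positivity : 0 < 2 * t)
    rw [sinh_two_mul, cosh_two_mul] at hcusa
    have : 3 * (cosh t / sinh t - 1 / t) - sinh t / cosh t
        = (t * (1 + 2 * cosh t ^ 2) - 3 * sinh t * cosh t) / (t * sinh t * cosh t) := by
      field_simp
      linear_combination t * cosh_sq t
    rw [this]
    exact div_pos (by nlinarith [cosh_sq t]) (by positivity)
  have hlim : Tendsto (fun t => 3 * log (sinh t / t) - log (cosh t)) (𝓝[>] 0) (𝓝 0) := by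
    have := ((tendsto_log_sinh_div_self.const_mul 3).sub
      (((continuous_cosh.tendsto 0).log (cosh_pos 0).ne').mono_left
        nhdsWithin_le_nhds)).mono_left (nhdsGT_le_nhdsNE 0)
    simpa using this
  have hpos := pos_of_deriv_pos_of_tendsto_zero hderiv hderiv_pos hlim hx
  have hs := sinh_pos_iff.2 hx
  have hlog : log (cosh x) < log ((sinh x / x) ^ 3) := by
    rw [log_pow]; push_cast; linarith
  have := (log_lt_log_iff (cosh_pos x) (by positivity)).1 hlog
  rw [div_pow, lt_div_iff₀ (by positivity)] at this
  linarith

lemma sq_mul_one_add_cosh_lt {x : ℝ} (hx : 0 < x) :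
    x ^ 2 * (1 + cosh x) < sinh x ^ 2 + x * sinh x := by
  obtain ⟨t, rfl⟩ : ∃ t, x = 2 * t := ⟨x / 2, by ring⟩
  have ht : 0 < t := by linarith
  have hs := sinh_pos_iff.2 ht
  have hst := self_lt_sinh_iff.2 ht
  have hc := cosh_pos t
  have hlaz := pow_three_mul_cosh_lt ht
  have key : 0 < sinh t ^ 2 * cosh t + t * sinh t - 2 * t ^ 2 * cosh t := by
    -- `s² (s² c + t s - 2 t² c) = c (s² - t²)² + t (s³ - t³ c)` with `s, c = sinh t, cosh t`
    have : 0 < sinh t ^ 2 * (sinh t ^ 2 * cosh t + t * sinh t - 2 * t ^ 2 * cosh t) := by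
      nlinarith [mul_pos hc (pow_pos (sub_pos.2 (mul_self_lt_mul_self ht.le hst)) 2)]
    exact pos_of_mul_pos_right this (by positivity)
  rw [sinh_two_mul, cosh_two_mul]
  nlinarith [mul_pos hc key, cosh_sq t]

lemma two_mul_sinh_sq_lt {x : ℝ} (hx : 0 < x) : 2 * sinh x ^ 2 < x ^ 2 + x * sinh x * cosh x := by
  -- the difference is `(sinh x - x)² + sinh x (x (2 + cosh x) - 3 sinh x)`
  nlinarith [mul_pos (sinh_pos_iff.2 hx) (sub_pos.2 (three_mul_sinh_lt hx)), sq_nonneg (sinh x - x)]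

lemma mul_cosh_div_sinh_sub_one_lt {x : ℝ} (hx : 0 < x) :
    x * cosh x / sinh x - 1 < 2 * log (sinh x / x) := by
  have hderiv (t : ℝ) (ht : 0 < t) :
      HasDerivAt (fun t => 2 * log (sinh t / t) - (t * cosh t / sinh t - 1))
        (2 * (cosh t / sinh t - 1 / t) - (cosh t * sinh t - t) / sinh t ^ 2) t :=
    ((hasDerivAt_log_sinh_div_self ht).const_mul 2).sub
      ((hasDerivAt_mul_cosh_div_sinh ht.ne').sub_const 1)
  have hderiv_pos (t : ℝ) (ht : 0 < t) :
      0 < 2 * (cosh t / sinh t - 1 / t) - (cosh t * sinh t - t) / sinh t ^ 2 := by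
    have hs := sinh_pos_iff.2 ht
    have : 2 * (cosh t / sinh t - 1 / t) - (cosh t * sinh t - t) / sinh t ^ 2
        = (t ^ 2 + t * sinh t * cosh t - 2 * sinh t ^ 2) / (t * sinh t ^ 2) := by
      field_simp
      ring
    rw [this]
    exact div_pos (sub_pos.2 (two_mul_sinh_sq_lt ht)) (by positivity)
  have hlim :
      Tendsto (fun t => 2 * log (sinh t / t) - (t * cosh t / sinh t - 1)) (𝓝[>] 0) (𝓝 0) := by
    simpa using ((tendsto_log_sinh_div_self.const_mul 2).sub
      (tendsto_mul_cosh_div_sinh.sub_const 1)).mono_left (nhdsGT_le_nhdsNE 0)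
  linarith [pos_of_deriv_pos_of_tendsto_zero hderiv hderiv_pos hlim hx]

lemma exp_mul_cosh_div_sinh_sub_one_lt {x : ℝ} (hx : 0 < x) :
    exp (x * cosh x / sinh x - 1) < 1 + cosh x - sinh x / x := by
  have hD (t : ℝ) (ht : 0 < t) : 0 < 1 + cosh t - sinh t / t := by
    have : sinh t / t < cosh t := by
      rw [div_lt_iff₀ ht, mul_comm]; exact sinh_lt_mul_cosh ht
    linarith
  have hderiv (t : ℝ) (ht : 0 < t) :
      HasDerivAt (fun t => log (1 + cosh t - sinh t / t) - (t * cosh t / sinh t - 1))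
        ((sinh t - (t * cosh t - sinh t) / t ^ 2) / (1 + cosh t - sinh t / t)
          - (cosh t * sinh t - t) / sinh t ^ 2) t :=
    ((((hasDerivAt_cosh t).const_add 1).sub (hasDerivAt_sinh_div_self ht.ne')).log
      (hD t ht).ne').sub ((hasDerivAt_mul_cosh_div_sinh ht.ne').sub_const 1)
  have hderiv_pos (t : ℝ) (ht : 0 < t) :
      0 < (sinh t - (t * cosh t - sinh t) / t ^ 2) / (1 + cosh t - sinh t / t)
          - (cosh t * sinh t - t) / sinh t ^ 2 := by
    have hs := sinh_pos_iff.2 ht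
    have hB := sinh_lt_mul_cosh ht
    have hden : 0 < t * (1 + cosh t) - sinh t := by nlinarith
    have hden_ne := hden.ne'
    have : (sinh t - (t * cosh t - sinh t) / t ^ 2) / (1 + cosh t - sinh t / t)
          - (cosh t * sinh t - t) / sinh t ^ 2
        = (sinh t - t) * (sinh t ^ 2 + t * sinh t - t ^ 2 * (1 + cosh t))
          / (t * sinh t ^ 2 * (t * (1 + cosh t) - sinh t)) := by
      rw [show 1 + cosh t - sinh t / t = (t * (1 + cosh t) - sinh t) / t by field_simp]
      field_simp
      linear_combination (-(sinh t * t ^ 2)) * cosh_sq t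
    rw [this]
    exact div_pos (mul_pos (sub_pos.2 (self_lt_sinh_iff.2 ht))
      (sub_pos.2 (sq_mul_one_add_cosh_lt ht))) (by positivity)
  have hlim : Tendsto (fun t => log (1 + cosh t - sinh t / t) - (t * cosh t / sinh t - 1))
      (𝓝[>] 0) (𝓝 0) := by
    have hcosh : Tendsto cosh (𝓝[≠] 0) (𝓝 1) := by
      simpa using continuous_cosh.continuousAt.tendsto.mono_left (nhdsWithin_le_nhds (a := (0:ℝ)))
    simpa using ((((hcosh.const_add 1).sub tendsto_sinh_div_self).log (by norm_num)).sub
      (tendsto_mul_cosh_div_sinh.sub_const 1)).mono_left (nhdsGT_le_nhdsNE 0)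
  have hpos := pos_of_deriv_pos_of_tendsto_zero hderiv hderiv_pos hlim hx
  calc exp (x * cosh x / sinh x - 1) < exp (log (1 + cosh x - sinh x / x)) :=
        exp_lt_exp.2 (by linarith)
    _ = 1 + cosh x - sinh x / x := exp_log (hD x hx)

lemma one_lt_sinh_div_self {x : ℝ} (hx : x ≠ 0) : 1 < sinh x / x := by
  rcases hx.lt_or_gt with hx | hx
  · exact (one_lt_div_of_neg hx).2 (sinh_lt_self_iff.2 hx)
  · exact (one_lt_div hx).2 (self_lt_sinh_iff.2 hx)

lemma mul_cosh_div_sinh_bounds {x : ℝ} (hx : x ≠ 0) :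
    0 < x * cosh x / sinh x - 1 ∧ exp ((x * cosh x / sinh x - 1) / 2) < sinh x / x ∧
      exp (x * cosh x / sinh x - 1) < 1 + (x * cosh x / sinh x - 1) * (sinh x / x) := by
  wlog hpos : 0 < x generalizing x
  · simpa [neg_div_neg_eq] using this (neg_ne_zero.2 hx) (by grind)
  have hs := sinh_pos_iff.2 hpos
  refine ⟨?_, ?_, ?_⟩
  · rw [sub_pos, one_lt_div hs]
    exact sinh_lt_mul_cosh hpos
  · rw [← exp_log (by positivity : 0 < sinh x / x)]
    exact exp_lt_exp.2 (by linarith [mul_cosh_div_sinh_sub_one_lt hpos])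
  · convert exp_mul_cosh_div_sinh_sub_one_lt hpos using 1
    field_simp
    ring

end Real

lemma exists_mul_exp_eq {a b : ℝ} (ha : 0 < a) (hb : 0 < b) (hab : a ≠ b) :
    ∃ g x, 0 < g ∧ x ≠ 0 ∧ a = g * exp x ∧ b = g * exp (-x) := by
  refine ⟨exp ((log a + log b) / 2), (log a - log b) / 2, exp_pos _, ?_, ?_, ?_⟩
  · intro h
    exact hab (log_injOn_pos ha hb (by linarith))
  all_goals rw [← exp_add]
  · rw [show (log a + log b) / 2 + (log a - log b) / 2 = log a by ring, exp_log ha]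
  · rw [show (log a + log b) / 2 + -((log a - log b) / 2) = log b by ring, exp_log hb]

lemma G_mul_exp_neg {g : ℝ} (hg : 0 ≤ g) (x : ℝ) : G (g * exp x) (g * exp (-x)) = g := by
  rw [G, mul_mul_mul_comm, ← exp_add, add_neg_cancel, exp_zero, mul_one, sqrt_mul_self hg]

lemma L_mul_exp {g : ℝ} (hg : 0 < g) (p q : ℝ) :
    L (g * exp p) (g * exp q) = g * ((exp p - exp q) / (p - q)) := by
  rw [L, log_mul hg.ne' (exp_pos p).ne', log_mul hg.ne' (exp_pos q).ne', log_exp, log_exp]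
  ring

lemma L_mul_exp_neg {g : ℝ} (hg : 0 < g) (x : ℝ) :
    L (g * exp x) (g * exp (-x)) = g * (sinh x / x) := by
  rw [L_mul_exp hg, sinh_eq]
  ring

lemma I_mul_exp_neg {g x : ℝ} (hg : 0 < g) (hx : x ≠ 0) :
    I (g * exp x) (g * exp (-x)) = g * exp (x * cosh x / sinh x - 1) := by
  have hs : sinh x ≠ 0 := by simpa using hx
  have ha : 0 < g * exp x := by positivity
  have hb : 0 < g * exp (-x) := by positivity
  have hsub : g * exp x - g * exp (-x) = 2 * g * sinh x := by rw [sinh_eq]; ring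
  rw [I, rpow_def_of_pos ha, rpow_def_of_pos hb, ← exp_sub, ← exp_mul, one_div (exp 1),
    ← exp_neg, ← exp_add, log_mul hg.ne' (exp_pos _).ne', log_mul hg.ne' (exp_pos _).ne',
    log_exp, log_exp, hsub]
  conv_rhs => rw [← exp_log hg, ← exp_add]
  congr 1
  field_simp
  rw [sinh_eq, cosh_eq]
  ring

lemma sqrt_mul_exp_mul_self {g : ℝ} (hg : 0 ≤ g) (u : ℝ) :
    Real.sqrt (g * exp u * g) = g * exp (u / 2) := by
  rw [show g * exp u * g = (g * exp (u / 2)) * (g * exp (u / 2)) by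
    rw [mul_mul_mul_comm, ← exp_add, add_halves]; ring]
  exact sqrt_mul_self (by positivity)

lemma G_lt_L {a b : ℝ} (ha : 0 < a) (hb : 0 < b) (hab : a ≠ b) : G a b < L a b := by
  obtain ⟨g, x, hg, hx, rfl, rfl⟩ := exists_mul_exp_eq ha hb hab
  rw [G_mul_exp_neg hg.le, L_mul_exp_neg hg]
  exact lt_mul_of_one_lt_right hg (one_lt_sinh_div_self hx)

theorem stmt_8 (a b : ℝ) (ha : 0 < a) (hb : 0 < b) (hab : a ≠ b) :
    G a b * I a b / L a b < Real.sqrt (I a b * G a b) ∧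
    Real.sqrt (I a b * G a b) < L (I a b) (G a b) ∧
    L (I a b) (G a b) < L a b := by
  obtain ⟨g, x, hg, hx, rfl, rfl⟩ := exists_mul_exp_eq ha hb hab
  obtain ⟨hu, hGIL, hLIG⟩ := mul_cosh_div_sinh_bounds hx
  rw [G_mul_exp_neg hg.le, L_mul_exp_neg hg, I_mul_exp_neg hg hx, sqrt_mul_exp_mul_self hg.le]
  set u := x * cosh x / sinh x - 1
  set A := sinh x / x
  refine ⟨?_, ?_, ?_⟩
  · rw [div_lt_iff₀ (mul_pos hg ((exp_pos _).trans hGIL))]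
    calc g * (g * exp u) = g * exp (u / 2) * (g * exp (u / 2)) := by
          rw [mul_mul_mul_comm, ← exp_add, add_halves]; ring
      _ < g * exp (u / 2) * (g * A) := by gcongr
  · rw [← sqrt_mul_exp_mul_self hg.le]
    exact G_lt_L (by positivity) hg (by simpa [hg.ne'] using hu.ne')
  · rw [show L (g * exp u) g = g * ((exp u - 1) / u) by simpa using L_mul_exp hg u 0]
    refine mul_lt_mul_of_pos_left ?_ hg
    rw [div_lt_iff₀ hu]
    linarith
end
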